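/- Let F be a free group, let r be a positive integer, and let D be a subset of the sphere S_r(e) with |D| = 3. Then D is a distinct difference configuration. -/

import Mathlib

/-! In a three-element set, a coincidence `g⁻¹ h = g'⁻¹ h'` of two distinct ordered pairs cannot
involve four distinct elements, so after cancellation it has the shape `a⁻¹ b = b⁻¹ c` with
`a ≠ b`. On a sphere this is impossible: writing `a = P S` and `b = P T` as reduced words with `P`
their longest common prefix, `a⁻¹ b` is the reduced word `S⁻¹ T` with `|S| = |T|`, so it
determines `S` and `T` as its two halves. Likewise `b⁻¹ c = U⁻¹ V` with `b = Q U`, and `S = U`.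
Since `|P| = |Q|`, the equality `P T = b = Q U` gives `T = U = S`, hence `a = b`. -/

/-- A subset `D` of a group is a distinct difference configuration. -/
def IsDDC {G : Type*} [Group G] (D : Set G) : Prop :=
  ∀ g ∈ D, ∀ h ∈ D, ∀ g' ∈ D, ∀ h' ∈ D,
    g ≠ h → g' ≠ h' → g⁻¹ * h = g'⁻¹ * h' → g = g' ∧ h = h'

theorem isDDC_of_ncard_le_three {G : Type*} [Group G] {D : Set G} (hfin : D.Finite)
    (hcard : D.ncard ≤ 3) (hD : ∀ a ∈ D, ∀ b ∈ D, ∀ c ∈ D, a ≠ b → a⁻¹ * b ≠ b⁻¹ * c) :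
    IsDDC D := by
  intro g hg h hh g' hg' h' hh' hgh hg'h' heq
  by_cases hgg' : g = g'
  · subst hgg'
    exact ⟨rfl, mul_left_cancel heq⟩
  by_cases hhh' : h = h'
  · subst hhh'
    exact ⟨inv_injective (mul_right_cancel heq), rfl⟩
  by_cases hg'h : g' = h
  · subst hg'h
    exact absurd heq (hD g hg g' hg' h' hh' hgh)
  by_cases hh'g : h' = g
  · subst hh'g
    exact absurd heq.symm (hD g' hg' h' hh' h hh hg'h')
  have : 3 < D.ncard := (Set.three_lt_ncard hfin).2
    ⟨g, hg, h, hh, g', hg', h', hh', hgh, hgg', Ne.symm hh'g, Ne.symm hg'h, hhh', hg'h'⟩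
  omega

namespace FreeGroup

variable {α : Type*} [DecidableEq α]

theorem IsReduced.invRev {L : List (α × Bool)} (h : IsReduced L) : IsReduced (invRev L) := by
  rw [isReduced_iff_reduce_eq, reduce_invRev, h.reduce_eq]

theorem isReduced_invRev_cons_append_cons {x y : α × Bool} {L₁ L₂ : List (α × Bool)}
    (h₁ : IsReduced (x :: L₁)) (h₂ : IsReduced (y :: L₂)) (hxy : x ≠ y) :
    IsReduced (invRev (x :: L₁) ++ y :: L₂) := by
  refine List.IsChain.append h₁.invRev h₂ ?_
  obtain ⟨a, s⟩ := x
  obtain ⟨b, t⟩ := y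
  simp only [invRev, List.map_cons, List.reverse_cons, List.getLast?_append, List.getLast?_singleton,
    Option.some_or, Option.mem_def, Option.some.injEq, List.head?_cons, forall_eq']
  rintro rfl
  cases s <;> cases t <;> simp_all

theorem exists_reduce_invRev_append_eq {L₁ L₂ : List (α × Bool)} (h₁ : IsReduced L₁)
    (h₂ : IsReduced L₂) : ∃ P S T, L₁ = P ++ S ∧ L₂ = P ++ T ∧
      reduce (invRev L₁ ++ L₂) = invRev S ++ T := by
  induction L₁ generalizing L₂ with
  | nil => exact ⟨[], [], L₂, rfl, rfl, by simpa using h₂.reduce_eq⟩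
  | cons x L₁ ih =>
    cases L₂ with
    | nil => exact ⟨[], x :: L₁, [], rfl, rfl, by simpa using h₁.invRev.reduce_eq⟩
    | cons y L₂ =>
      by_cases hxy : x = y
      · subst hxy
        obtain ⟨P, S, T, rfl, rfl, hred⟩ := ih (h₁.infix (List.suffix_cons x L₁).isInfix)
          (h₂.infix (List.suffix_cons x L₂).isInfix)
        refine ⟨x :: P, S, T, rfl, rfl, ?_⟩
        have hstep : Red.Step (invRev (x :: (P ++ S)) ++ x :: (P ++ T))
            (invRev (P ++ S) ++ (P ++ T)) := by
          rw [invRev_cons, List.append_assoc]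
          exact Red.Step.not_rev
        rw [reduce.Step.eq hstep, hred]
      · exact ⟨[], x :: L₁, y :: L₂, rfl, rfl,
          (isReduced_invRev_cons_append_cons h₁ h₂ hxy).reduce_eq⟩

theorem exists_toWord_inv_mul_eq (x y : FreeGroup α) : ∃ P S T, x.toWord = P ++ S ∧
    y.toWord = P ++ T ∧ (x⁻¹ * y).toWord = invRev S ++ T := by
  rw [toWord_mul, toWord_inv]
  exact exists_reduce_invRev_append_eq isReduced_toWord isReduced_toWord

theorem eq_of_inv_mul_eq_inv_mul {a b c : FreeGroup α} (hab : a.norm = b.norm)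
    (hbc : b.norm = c.norm) (h : a⁻¹ * b = b⁻¹ * c) : a = b := by
  obtain ⟨P, S₁, S₂, ha, hb, hab'⟩ := exists_toWord_inv_mul_eq a b
  obtain ⟨Q, T₁, T₂, hb', hc, hbc'⟩ := exists_toWord_inv_mul_eq b c
  unfold norm at hab hbc
  have hS : S₁.length = S₂.length := by simp only [ha, hb, List.length_append] at hab; omega
  have hT : T₁.length = T₂.length := by simp only [hb', hc, List.length_append] at hbc; omega
  have hST : invRev S₁ ++ S₂ = invRev T₁ ++ T₂ := by rw [← hab', ← hbc', h]
  have hST₁ : S₁.length = T₁.length := by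
    have := congrArg List.length hST
    simp only [List.length_append, invRev_length] at this
    omega
  obtain ⟨hS₁, -⟩ := List.append_inj hST (by simp [hST₁])
  have hPQ : P ++ S₂ = Q ++ T₁ := hb.symm.trans hb'
  have hP : P.length = Q.length := by
    have := congrArg List.length hPQ
    simp only [List.length_append] at this
    omega
  obtain ⟨-, hS₂⟩ := List.append_inj hPQ hP
  rw [← toWord_inj, ha, hb, invRev_injective hS₁, hS₂]

end FreeGroup

theorem stmt9_general (α : Type*) [DecidableEq α] (r : ℕ)
    (D : Set (FreeGroup α)) (hD : D ⊆ {g : FreeGroup α | g.norm = r})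
    (hcard : D.ncard = 3) : IsDDC D := by
  refine isDDC_of_ncard_le_three (Set.finite_of_ncard_ne_zero (by omega)) hcard.le ?_
  intro a ha b hb c hc hab h
  have hnorm {x} (hx : x ∈ D) : x.norm = r := hD hx
  exact hab (FreeGroup.eq_of_inv_mul_eq_inv_mul ((hnorm ha).trans (hnorm hb).symm)
    ((hnorm hb).trans (hnorm hc).symm) h)

theorem stmt9 (α : Type*) [DecidableEq α] (r : ℕ) (hr : 0 < r)
    (D : Set (FreeGroup α)) (hD : D ⊆ {g : FreeGroup α | g.norm = r})
    (hcard : D.ncard = 3) : IsDDC D :=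
  stmt9_general α r D hD hcard
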